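/- arXiv:2405.02596 — 3 statements merged into one kernel-verified Lean document; each statement's English description precedes it below -/
import Mathlib

section
/- Suppose y = X w* + ε where ε has mean zero and covariance σ² I_n, and gradient descent with η < 2n/λ_1 and zero initialization converges to ŵ = (XM)† y. Then E[||ŵ||²] ≥ σ² Σ_{i: λ_i > 0} 1/λ_i, where λ_i are the eigenvalues of M Xᵀ X M, and the expectation is over ε. -/
open Matrix Filter Topology MeasureTheory ProbabilityTheory

/-- The four Penrose conditions characterizing the Moore–Penrose pseudo-inverse. -/
def IsMoorePenrose {n d : ℕ} (A : Matrix (Fin n) (Fin d) ℝ) (B : Matrix (Fin d) (Fin n) ℝ) : Prop :=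
  A * B * A = A ∧ B * A * B = B ∧ (A * B)ᵀ = A * B ∧ (B * A)ᵀ = B * A

/-- Gradient descent iterates for L(w) = (1/2n)‖y - X M w‖², where
∇L(w) = (1/n)(M Xᵀ X M w - M Xᵀ y). -/
noncomputable def gd {n d : ℕ} (X : Matrix (Fin n) (Fin d) ℝ) (M : Matrix (Fin d) (Fin d) ℝ)
    (y : Fin n → ℝ) (η : ℝ) (w0 : Fin d → ℝ) : ℕ → (Fin d → ℝ)
  | 0 => w0
  | t + 1 => gd X M y η w0 t -
      η • ((n : ℝ)⁻¹ • ((M * Xᵀ * X * M).mulVec (gd X M y η w0 t) - (M * Xᵀ).mulVec y))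

/-- The `i`-th largest eigenvalue of a Hermitian real matrix. -/
noncomputable def ithLargest {d : ℕ} {A : Matrix (Fin d) (Fin d) ℝ} (hA : A.IsHermitian)
    (i : Fin d) : ℝ :=
  (hA.eigenvalues ∘ Tuple.sort hA.eigenvalues) i.rev

lemma diag_herm {n d : ℕ} (X : Matrix (Fin n) (Fin d) ℝ) (v : Fin d → ℝ) :
    (Matrix.diagonal v * Xᵀ * X * Matrix.diagonal v).IsHermitian := by
  have h : Matrix.diagonal v * Xᵀ * X * Matrix.diagonal v
      = (X * Matrix.diagonal v)ᵀ * (X * Matrix.diagonal v) := by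
    rw [Matrix.transpose_mul, Matrix.diagonal_transpose, Matrix.mul_assoc, Matrix.mul_assoc]
  rw [h]
  simpa using Matrix.isHermitian_conjTranspose_mul_self (X * Matrix.diagonal v)

lemma hermXtX {n d : ℕ} (X : Matrix (Fin n) (Fin d) ℝ) : (Xᵀ * X).IsHermitian := by
  simpa using Matrix.isHermitian_conjTranspose_mul_self X

/-- The spectral norm (largest singular value) of a square real matrix. -/
noncomputable def specNorm {n : ℕ} (A : Matrix (Fin n) (Fin n) ℝ) : ℝ :=
  ‖(Matrix.toEuclideanCLM (𝕜 := ℝ) A)‖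

lemma herm_left {n d : ℕ} (X : Matrix (Fin n) (Fin d) ℝ) (v : Fin d → ℝ) :
    (X * Matrix.diagonal v * Xᵀ).IsHermitian := by
  have h2 : (X * Matrix.diagonal v * Xᵀ)ᵀ = X * Matrix.diagonal v * Xᵀ := by
    rw [Matrix.transpose_mul, Matrix.transpose_mul, Matrix.transpose_transpose,
      Matrix.diagonal_transpose, Matrix.mul_assoc]
  rw [Matrix.IsHermitian]
  simpa using h2

/-!
With `A = X M`, the Penrose equations for `P = A†` make `P Pᵀ` a Moore–Penrose inverse of the
Gram matrix `Aᵀ A = M Xᵀ X M`. By uniqueness it is the spectral one, `cfc (·⁻¹)`, so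
`tr (P Pᵀ) = ∑ 1 / λᵢ` over the nonzero eigenvalues. Because the noise is centred and white,
`E ‖P (X w* + ε)‖² = ‖P X w*‖² + σ² tr (P Pᵀ)`, and dropping the bias term gives the bound.
-/

namespace IsMoorePenrose

variable {k e : ℕ} {A : Matrix (Fin k) (Fin e) ℝ} {B C : Matrix (Fin e) (Fin k) ℝ}

theorem unique (hB : IsMoorePenrose A B) (hC : IsMoorePenrose A C) : B = C := by
  obtain ⟨hB1, hB2, hB3, hB4⟩ := hB
  obtain ⟨hC1, hC2, hC3, hC4⟩ := hC
  have hAB : A * B = A * C :=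
    calc A * B = (A * C)ᵀ * (A * B)ᵀ := by rw [hC3, hB3, ← Matrix.mul_assoc, hC1]
    _ = (A * C)ᵀ := by rw [← transpose_mul, ← Matrix.mul_assoc, hB1]
    _ = A * C := hC3
  have hBA : B * A = C * A :=
    calc B * A = (B * A)ᵀ * (C * A)ᵀ := by
          rw [hB4, hC4, Matrix.mul_assoc B, ← Matrix.mul_assoc A, hC1]
    _ = (C * A)ᵀ := by rw [← transpose_mul, Matrix.mul_assoc C, ← Matrix.mul_assoc A, hB1]
    _ = C * A := hC4
  calc B = B * A * B := hB2.symm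
  _ = C * A * C := by rw [hBA, Matrix.mul_assoc, hAB, ← Matrix.mul_assoc]
  _ = C := hC2

theorem transpose_mul_self (hB : IsMoorePenrose A B) : IsMoorePenrose (Aᵀ * A) (B * Bᵀ) := by
  obtain ⟨h1, h2, h3, h4⟩ := hB
  have hBA : Bᵀ * Aᵀ = A * B := by rw [← transpose_mul, h3]
  have hAB : Aᵀ * Bᵀ = B * A := by rw [← transpose_mul, h4]
  have hleft : B * Bᵀ * (Aᵀ * A) = B * A := by
    rw [Matrix.mul_assoc, ← Matrix.mul_assoc Bᵀ, hBA, h1]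
  have hright : Aᵀ * A * (B * Bᵀ) = B * A := by
    rw [Matrix.mul_assoc, ← Matrix.mul_assoc A, ← hBA, ← Matrix.mul_assoc, ← Matrix.mul_assoc,
      hAB, Matrix.mul_assoc, hAB, ← Matrix.mul_assoc, h2]
  refine ⟨?_, ?_, ?_, ?_⟩
  · rw [hright, ← hAB, Matrix.mul_assoc, ← Matrix.mul_assoc Bᵀ, hBA, h1]
  · rw [hleft, ← Matrix.mul_assoc, h2]
  · rw [hright, h4]
  · rw [hleft, h4]

end IsMoorePenrose

theorem Matrix.IsHermitian.trace_cfc {ι 𝕜 : Type*} [RCLike 𝕜] [Fintype ι] [DecidableEq ι]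
    {A : Matrix ι ι 𝕜} (hA : A.IsHermitian) (f : ℝ → ℝ) :
    (cfc f A).trace = ∑ i, (f (hA.eigenvalues i) : 𝕜) := by
  rw [hA.cfc_eq, IsHermitian.cfc, Unitary.conjStarAlgAut_apply, trace_mul_cycle,
    Unitary.coe_star_mul_self, Matrix.one_mul, trace_diagonal]
  rfl

theorem Matrix.IsHermitian.isMoorePenrose_cfc_inv {d : ℕ} {H : Matrix (Fin d) (Fin d) ℝ}
    (hH : H.IsHermitian) : IsMoorePenrose H (cfc (fun x : ℝ => x⁻¹) H) := by
  have hsa : IsSelfAdjoint H := hH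
  have hsym : ∀ f : ℝ → ℝ, (cfc f H)ᵀ = cfc f H := fun f => (cfc_predicate f H).star_eq
  have hmul : ∀ f g : ℝ → ℝ, cfc f H * cfc g H = cfc (fun x => f x * g x) H :=
    fun f g => (cfc_mul f g H (H.finite_spectrum.continuousOn f)
      (H.finite_spectrum.continuousOn g)).symm
  nth_rewrite 1 [← cfc_id' ℝ H]
  refine ⟨?_, ?_, ?_, ?_⟩ <;> simp only [hmul, hsym]
  · simp only [mul_inv_mul_cancel]
  · simpa only [inv_inv] using congrArg (cfc · H) (funext fun x : ℝ => mul_inv_mul_cancel x⁻¹)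

theorem IsMoorePenrose.trace_eq_sum_inv_eigenvalues {d : ℕ} {H Q : Matrix (Fin d) (Fin d) ℝ}
    (hH : H.IsHermitian) (hQ : IsMoorePenrose H Q) : Q.trace = ∑ i, (hH.eigenvalues i)⁻¹ := by
  rw [hQ.unique hH.isMoorePenrose_cfc_inv, hH.trace_cfc]
  rfl

theorem dotProduct_sq_eq_sum_sum {ι R : Type*} [Fintype ι] [CommSemiring R] (a v : ι → R) :
    (a ⬝ᵥ v) ^ 2 = ∑ i, ∑ j, a i * a j * (v i * v j) := by
  simp only [sq, dotProduct, Finset.sum_mul_sum, mul_mul_mul_comm]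

section WhiteNoise

variable {Ω ι : Type*} [MeasurableSpace Ω] {μ : Measure Ω} [Fintype ι] {ε : Ω → ι → ℝ} {σ : ℝ}

theorem integrable_dotProduct (hε : ∀ i, Integrable (fun ω => ε ω i) μ) (a : ι → ℝ) :
    Integrable (fun ω => a ⬝ᵥ ε ω) μ :=
  integrable_finsetSum _ fun i _ => (hε i).const_mul (a i)

theorem integrable_dotProduct_sq (hint : ∀ i j, Integrable (fun ω => ε ω i * ε ω j) μ)
    (a : ι → ℝ) : Integrable (fun ω => (a ⬝ᵥ ε ω) ^ 2) μ := by
  simp only [dotProduct_sq_eq_sum_sum]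
  exact integrable_finsetSum _ fun i _ => integrable_finsetSum _ fun j _ =>
    (hint i j).const_mul _

theorem integrable_add_dotProduct_sq [IsFiniteMeasure μ]
    (hε : ∀ i, Integrable (fun ω => ε ω i) μ)
    (hint : ∀ i j, Integrable (fun ω => ε ω i * ε ω j) μ) (c : ℝ) (a : ι → ℝ) :
    Integrable (fun ω => (c + a ⬝ᵥ ε ω) ^ 2) μ := by
  simp only [add_sq]
  exact ((integrable_const _).add ((integrable_dotProduct hε a).const_mul _)).add
    (integrable_dotProduct_sq hint a)

variable [DecidableEq ι]

theorem integral_dotProduct_sq (hint : ∀ i j, Integrable (fun ω => ε ω i * ε ω j) μ)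
    (hcov : ∀ i j, ∫ ω, ε ω i * ε ω j ∂μ = if i = j then σ ^ 2 else 0) (a : ι → ℝ) :
    ∫ ω, (a ⬝ᵥ ε ω) ^ 2 ∂μ = σ ^ 2 * (a ⬝ᵥ a) := by
  simp only [dotProduct_sq_eq_sum_sum]
  rw [integral_finsetSum _ fun i _ => integrable_finsetSum _ fun j _ => (hint i j).const_mul _]
  simp_rw [integral_finsetSum _ fun j _ => (hint _ j).const_mul _, integral_const_mul, hcov]
  simp [dotProduct, Finset.mul_sum, mul_comm]

variable [IsProbabilityMeasure μ]

theorem integral_add_dotProduct_sq (hε : ∀ i, Integrable (fun ω => ε ω i) μ)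
    (hmean : ∀ i, ∫ ω, ε ω i ∂μ = 0) (hint : ∀ i j, Integrable (fun ω => ε ω i * ε ω j) μ)
    (hcov : ∀ i j, ∫ ω, ε ω i * ε ω j ∂μ = if i = j then σ ^ 2 else 0) (c : ℝ) (a : ι → ℝ) :
    ∫ ω, (c + a ⬝ᵥ ε ω) ^ 2 ∂μ = c ^ 2 + σ ^ 2 * (a ⬝ᵥ a) := by
  have hlin := integrable_dotProduct hε a
  have hlin_mean : ∫ ω, a ⬝ᵥ ε ω ∂μ = 0 := by
    simp only [dotProduct]
    rw [integral_finsetSum _ fun i _ => (hε i).const_mul (a i)]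
    simp [integral_const_mul, hmean]
  have haff : Integrable (fun ω => c ^ 2 + 2 * c * (a ⬝ᵥ ε ω)) μ :=
    (integrable_const _).add (hlin.const_mul _)
  simp only [add_sq]
  rw [integral_add haff (integrable_dotProduct_sq hint a),
    integral_add (integrable_const _) (hlin.const_mul _), integral_const, integral_const_mul,
    hlin_mean, integral_dotProduct_sq hint hcov]
  simp

theorem integral_sum_add_mulVec_sq {κ : Type*} [Fintype κ]
    (hε : ∀ i, Integrable (fun ω => ε ω i) μ) (hmean : ∀ i, ∫ ω, ε ω i ∂μ = 0)
    (hint : ∀ i j, Integrable (fun ω => ε ω i * ε ω j) μ)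
    (hcov : ∀ i j, ∫ ω, ε ω i * ε ω j ∂μ = if i = j then σ ^ 2 else 0)
    (c : κ → ℝ) (P : Matrix κ ι ℝ) :
    ∫ ω, ∑ j, (c j + (P *ᵥ ε ω) j) ^ 2 ∂μ = ∑ j, c j ^ 2 + σ ^ 2 * (P * Pᵀ).trace := by
  change ∫ ω, ∑ j, (c j + P j ⬝ᵥ ε ω) ^ 2 ∂μ = _
  rw [integral_finsetSum _ fun j _ => integrable_add_dotProduct_sq hε hint (c j) (P j)]
  simp only [integral_add_dotProduct_sq hε hmean hint hcov, Finset.sum_add_distrib,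
    trace, diag, mul_apply', Finset.mul_sum]
  rfl

end WhiteNoise

theorem expected_norm_lower_bound_general {n d : ℕ} {Ω : Type} [MeasurableSpace Ω]
    (μ : Measure Ω) [IsProbabilityMeasure μ] (σ : ℝ)
    (X : Matrix (Fin n) (Fin d) ℝ) (v : Fin d → ℝ)
    (M : Matrix (Fin d) (Fin d) ℝ) (hM : M = Matrix.diagonal v)
    (wstar : Fin d → ℝ) (ε : Ω → Fin n → ℝ)
    (hmeas : ∀ i, Measurable fun ω => ε ω i)
    (hmean : ∀ i, ∫ ω, ε ω i ∂μ = 0)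
    (hint : ∀ i j, Integrable (fun ω => ε ω i * ε ω j) μ)
    (hcov : ∀ i j, ∫ ω, ε ω i * ε ω j ∂μ = if i = j then σ ^ 2 else 0)
    (P : Matrix (Fin d) (Fin n) ℝ) (hP : IsMoorePenrose (X * M) P)
    (hH : (M * Xᵀ * X * M).IsHermitian) :
    (∑ i ∈ Finset.univ.filter (fun i => 0 < hH.eigenvalues i), σ ^ 2 / hH.eigenvalues i) ≤
      ∫ ω, ∑ j, (P.mulVec (X.mulVec wstar + ε ω) j) ^ 2 ∂μ := by
  have hgram : M * Xᵀ * X * M = (X * M)ᵀ * (X * M) := by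
    rw [transpose_mul, hM, diagonal_transpose, Matrix.mul_assoc, Matrix.mul_assoc]
  have hε : ∀ i, Integrable (fun ω => ε ω i) μ := fun i =>
    ((memLp_two_iff_integrable_sq (hmeas i).aestronglyMeasurable).2
      (by simpa only [sq] using hint i i)).integrable one_le_two
  have htrace : (P * Pᵀ).trace = ∑ i, (hH.eigenvalues i)⁻¹ := by
    have hQ := hP.transpose_mul_self
    rw [← hgram] at hQ
    exact hQ.trace_eq_sum_inv_eigenvalues hH
  have hnonneg : ∀ i, 0 ≤ hH.eigenvalues i := by
    have hpsd := posSemidef_conjTranspose_mul_self (X * M)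
    rw [conjTranspose_eq_transpose_of_trivial, ← hgram] at hpsd
    exact hpsd.eigenvalues_nonneg
  -- zero eigenvalues drop out of the left side and contribute `0⁻¹ = 0` to the trace
  have hpos : ∑ i ∈ Finset.univ.filter (fun i => 0 < hH.eigenvalues i), σ ^ 2 / hH.eigenvalues i
      = σ ^ 2 * ∑ i, (hH.eigenvalues i)⁻¹ := by
    rw [Finset.mul_sum, Finset.sum_filter_of_ne fun i _ hi =>
      (hnonneg i).lt_of_ne fun h => hi (by rw [← h, div_zero])]
    simp only [div_eq_mul_inv]
  have hnoise := integral_sum_add_mulVec_sq hε hmean hint hcov (P *ᵥ X *ᵥ wstar) P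
  simp only [← Pi.add_apply, ← mulVec_add] at hnoise
  rw [hpos, ← htrace, hnoise]
  exact le_add_of_nonneg_left (Finset.sum_nonneg fun j _ => sq_nonneg _)

/-- E‖ŵ‖² ≥ σ² Σ_{λᵢ>0} 1/λᵢ for ŵ = (XM)†(Xw* + ε). -/
theorem expected_norm_lower_bound {n d : ℕ} {Ω : Type} [MeasurableSpace Ω]
    (μ : Measure Ω) [IsProbabilityMeasure μ] (σ : ℝ)
    (X : Matrix (Fin n) (Fin d) ℝ) (v : Fin d → ℝ) (hv : ∀ i, v i = 0 ∨ v i = 1)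
    (M : Matrix (Fin d) (Fin d) ℝ) (hM : M = Matrix.diagonal v)
    (wstar : Fin d → ℝ) (ε : Ω → Fin n → ℝ)
    (hmeas : ∀ i, Measurable fun ω => ε ω i)
    (hmean : ∀ i, ∫ ω, ε ω i ∂μ = 0)
    (hint : ∀ i j, Integrable (fun ω => ε ω i * ε ω j) μ)
    (hcov : ∀ i j, ∫ ω, ε ω i * ε ω j ∂μ = if i = j then σ ^ 2 else 0)
    (P : Matrix (Fin d) (Fin n) ℝ) (hP : IsMoorePenrose (X * M) P)
    (hH : (M * Xᵀ * X * M).IsHermitian) :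
    (∑ i ∈ Finset.univ.filter (fun i => 0 < hH.eigenvalues i), σ ^ 2 / hH.eigenvalues i) ≤
      ∫ ω, ∑ j, (P.mulVec (X.mulVec wstar + ε ω) j) ^ 2 ∂μ :=
  expected_norm_lower_bound_general μ σ X v M hM wstar ε hmeas hmean hint hcov P hP hH
end

section
/- Let Q be a random symmetric n×n matrix such that for every unit vector u and all t ∈ ℝ, E[exp(t⟨u, Qu⟩)] ≤ exp(c t²/8) for a constant c > 0. Suppose unit vectors v_1,…,v_N with N ≤ 17^n satisfy ||Q||₂ ≤ 2 max_j |⟨v_j, Q v_j⟩|. Then for all λ > 0, E[exp(λ ||Q||₂)] ≤ exp(4n + c λ² / 2). -/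
/-!
Over the finite net `v`, `‖Q‖₂ ≤ 2 maxⱼ |⟨vⱼ, Q vⱼ⟩|`, and `exp (s |x|) ≤ exp (s x) + exp (-s x)`, so
`exp (λ ‖Q‖₂)` is dominated by the sum of the `2N` exponentials `exp (± 2λ ⟨vⱼ, Q vⱼ⟩)`. Each has
expectation at most `exp (c λ² / 2)` by the sub-Gaussian hypothesis, and `2N ≤ 2 · 17ⁿ ≤ e^{4n}`.
-/

open Matrix Filter Topology MeasureTheory ProbabilityTheory

open Real

theorem exp_mul_iSup_abs_le_sum {ι : Type*} [Fintype ι] [Nonempty ι] (x : ι → ℝ) (s : ℝ) :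
    exp (s * ⨆ j, |x j|) ≤ ∑ j, (exp (s * x j) + exp (-s * x j)) := by
  obtain ⟨j₀, hj₀⟩ := Finite.exists_max fun j => |x j|
  have hsup : (⨆ j, |x j|) = |x j₀| := le_antisymm (ciSup_le hj₀)
    (le_ciSup (f := fun j => |x j|) (Finite.bddAbove_range _) j₀)
  calc exp (s * ⨆ j, |x j|) ≤ exp |s * x j₀| := by
        rw [hsup, abs_mul]
        exact exp_le_exp.2 (mul_le_mul_of_nonneg_right (le_abs_self s) (abs_nonneg _))
    _ ≤ exp (s * x j₀) + exp (-s * x j₀) := by rw [neg_mul]; exact exp_abs_le _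
    _ ≤ ∑ j, (exp (s * x j) + exp (-s * x j)) :=
        Finset.single_le_sum (f := fun j => exp (s * x j) + exp (-s * x j))
          (fun j _ => by positivity) (Finset.mem_univ j₀)

theorem integral_exp_le_of_le_mul_iSup_abs {Ω ι : Type*} [MeasurableSpace Ω] {μ : Measure Ω}
    [Fintype ι] [Nonempty ι] {X : ι → Ω → ℝ} {Y : Ω → ℝ} {s B : ℝ}
    (hY : ∀ ω, Y ω ≤ s * ⨆ j, |X j ω|)
    (hint_pos : ∀ j, Integrable (fun ω => exp (s * X j ω)) μ)
    (hint_neg : ∀ j, Integrable (fun ω => exp (-s * X j ω)) μ)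
    (hpos : ∀ j, ∫ ω, exp (s * X j ω) ∂μ ≤ B) (hneg : ∀ j, ∫ ω, exp (-s * X j ω) ∂μ ≤ B) :
    ∫ ω, exp (Y ω) ∂μ ≤ 2 * Fintype.card ι * B := by
  have hint : ∀ j, Integrable (fun ω => exp (s * X j ω) + exp (-s * X j ω)) μ :=
    fun j => (hint_pos j).add (hint_neg j)
  calc ∫ ω, exp (Y ω) ∂μ ≤ ∫ ω, ∑ j, (exp (s * X j ω) + exp (-s * X j ω)) ∂μ :=
        integral_mono_of_nonneg (ae_of_all _ fun _ => (exp_pos _).le)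
          (integrable_finsetSum _ fun j _ => hint j)
          (ae_of_all _ fun ω => (exp_le_exp.2 (hY ω)).trans (exp_mul_iSup_abs_le_sum _ s))
    _ = ∑ j, (∫ ω, exp (s * X j ω) ∂μ + ∫ ω, exp (-s * X j ω) ∂μ) := by
        rw [integral_finsetSum _ fun j _ => hint j]
        exact Finset.sum_congr rfl fun j _ => integral_add (hint_pos j) (hint_neg j)
    _ ≤ ∑ _j : ι, (B + B) := Finset.sum_le_sum fun j _ => add_le_add (hpos j) (hneg j)
    _ = 2 * Fintype.card ι * B := by rw [Finset.sum_const, nsmul_eq_mul, Finset.card_univ]; ring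

theorem two_mul_seventeen_pow_le_exp {n : ℕ} (hn : 1 ≤ n) : 2 * (17 : ℝ) ^ n ≤ exp (4 * n) := by
  have h34 : (34 : ℝ) ≤ exp 4 := by
    have : (2.7 : ℝ) ^ 4 ≤ exp 1 ^ 4 :=
      pow_le_pow_left₀ (by norm_num) (exp_one_gt_d9.le.trans' (by norm_num)) 4
    rw [← exp_nat_mul] at this
    norm_num at this
    linarith
  calc 2 * (17 : ℝ) ^ n ≤ 2 ^ n * 17 ^ n := by
        gcongr; simpa using pow_le_pow_right₀ (by norm_num : (1 : ℝ) ≤ 2) hn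
    _ = 34 ^ n := by rw [← mul_pow]; norm_num
    _ ≤ exp 4 ^ n := pow_le_pow_left₀ (by norm_num) h34 n
    _ = exp (4 * n) := by rw [← exp_nat_mul]; ring_nf

theorem spectral_mgf_bound_general {n N : ℕ} (hn : 1 ≤ n) (hN : 0 < N) (hNle : N ≤ 17 ^ n)
    (c : ℝ)
    {Ω : Type} [MeasurableSpace Ω] (μ : Measure Ω)
    (Q : Ω → Matrix (Fin n) (Fin n) ℝ)
    (hintQ : ∀ (u : Fin n → ℝ) (t : ℝ),
      Integrable (fun ω => Real.exp (t * (u ⬝ᵥ (Q ω).mulVec u))) μ)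
    (hmgf : ∀ u : Fin n → ℝ, (∑ i, (u i) ^ 2) = 1 → ∀ t : ℝ,
      ∫ ω, Real.exp (t * (u ⬝ᵥ (Q ω).mulVec u)) ∂μ ≤ Real.exp (c * t ^ 2 / 8))
    (v : Fin N → Fin n → ℝ) (hunit : ∀ j, (∑ i, (v j i) ^ 2) = 1)
    (hcover : ∀ ω, specNorm (Q ω) ≤ 2 * ⨆ j, |v j ⬝ᵥ (Q ω).mulVec (v j)|) :
    ∀ l : ℝ, 0 < l →
      ∫ ω, Real.exp (l * specNorm (Q ω)) ∂μ ≤ Real.exp (4 * n + c * l ^ 2 / 2) := by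
  intro l hl
  have : Nonempty (Fin N) := ⟨⟨0, hN⟩⟩
  have hcard : (2 : ℝ) * N ≤ exp (4 * n) :=
    (mul_le_mul_of_nonneg_left (by exact_mod_cast hNle) two_pos.le).trans
      (two_mul_seventeen_pow_le_exp hn)
  have hbound := integral_exp_le_of_le_mul_iSup_abs (μ := μ) (s := 2 * l)
    (B := exp (c * l ^ 2 / 2)) (Y := fun ω => l * specNorm (Q ω))
    (fun ω => (mul_le_mul_of_nonneg_left (hcover ω) hl.le).trans_eq (by ring))
    (fun j => hintQ (v j) _) (fun j => hintQ (v j) _)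
    (fun j => (hmgf _ (hunit j) _).trans_eq (by ring_nf))
    (fun j => (hmgf _ (hunit j) _).trans_eq (by ring_nf))
  rw [Fintype.card_fin] at hbound
  calc ∫ ω, exp (l * specNorm (Q ω)) ∂μ ≤ 2 * N * exp (c * l ^ 2 / 2) := hbound
    _ ≤ exp (4 * n) * exp (c * l ^ 2 / 2) := by gcongr
    _ = exp (4 * n + c * l ^ 2 / 2) := (exp_add _ _).symm

/-- MGF bound for the spectral norm via a discretization argument. -/
theorem spectral_mgf_bound {n N : ℕ} (hn : 1 ≤ n) (hN : 0 < N) (hNle : N ≤ 17 ^ n)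
    (c : ℝ) (hc : 0 < c)
    {Ω : Type} [MeasurableSpace Ω] (μ : Measure Ω) [IsProbabilityMeasure μ]
    (Q : Ω → Matrix (Fin n) (Fin n) ℝ) (hsym : ∀ ω, (Q ω)ᵀ = Q ω)
    (hmeasQ : ∀ i j, Measurable fun ω => Q ω i j)
    (hintQ : ∀ (u : Fin n → ℝ) (t : ℝ),
      Integrable (fun ω => Real.exp (t * (u ⬝ᵥ (Q ω).mulVec u))) μ)
    (hmgf : ∀ u : Fin n → ℝ, (∑ i, (u i) ^ 2) = 1 → ∀ t : ℝ,
      ∫ ω, Real.exp (t * (u ⬝ᵥ (Q ω).mulVec u)) ∂μ ≤ Real.exp (c * t ^ 2 / 8))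
    (v : Fin N → Fin n → ℝ) (hunit : ∀ j, (∑ i, (v j i) ^ 2) = 1)
    (hcover : ∀ ω, specNorm (Q ω) ≤ 2 * ⨆ j, |v j ⬝ᵥ (Q ω).mulVec (v j)|) :
    ∀ l : ℝ, 0 < l →
      ∫ ω, Real.exp (l * specNorm (Q ω)) ∂μ ≤ Real.exp (4 * n + c * l ^ 2 / 2) :=
  spectral_mgf_bound_general hn hN hNle c μ Q hintQ hmgf v hunit hcover
end

section
/- Let H = M Xᵀ X M where M = diag(m_1,…,m_d), m_i i.i.d. Bernoulli(p), and X has entries in [0, r]. If p ≤ λ₀ / (2 λ_1(XᵀX)) and 2√(2dn³r⁴) + √(2 log(1/δ) d n² r⁴) ≤ λ₀/2 for some λ₀ > 0 and 0 < δ < 1, then with probability at least 1 − δ the largest eigenvalue λ_1(H) ≤ λ₀, and hence every learning rate η < 2n/λ₀ makes gradient descent on L(w) = (1/2n)||y − XMw||² converge from any initialization. -/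
open Matrix Filter Topology MeasureTheory ProbabilityTheory

/-!
On the event that every entry of `X (M - p) Xᵀ = ∑ⱼ (mⱼ - p) xⱼ xⱼᵀ` is at most
`s = λ₀ / (2n)` in absolute value, the quadratic form of `(XM)(XM)ᵀ = X M Xᵀ` (as `M² = M`) is
bounded by `p λ₁(XᵀX) + n s ≤ λ₀`, and `H = (XM)ᵀ(XM)` inherits this bound because
`‖XM v‖⁴ = ⟨(XM)ᵀ XM v, v⟩² ≤ ‖(XM)ᵀ XM v‖² ‖v‖²`. Each entry is a sum of `d` independent bounded
centred variables, so Hoeffding's inequality and a union bound over the `n²` entries give the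
event probability at least `1 - δ`.

In the eigenbasis of `H` gradient descent splits into scalar recursions
`a ↦ a - (η / n) (λᵢ a - βᵢ)`, which contract when `0 < η λᵢ < 2n`, and are constant when
`λᵢ = 0`, since the gradient `(XM)ᵀ (XM w - y)` has no component in `ker H = ker XM`.
-/

open Real

namespace Matrix.IsHermitian

variable {ι : Type*} [Fintype ι] [DecidableEq ι] {H : Matrix ι ι ℝ} (hH : H.IsHermitian)

local notation "U" => (hH.eigenvectorUnitary : Matrix ι ι ℝ)

lemma eigenvectorUnitary_mul_transpose : U * Uᵀ = 1 := by
  simpa [star_eq_conjTranspose] using Unitary.coe_mul_star_self hH.eigenvectorUnitary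

lemma transpose_mul_eigenvectorUnitary : Uᵀ * U = 1 := by
  simpa [star_eq_conjTranspose] using Unitary.coe_star_mul_self hH.eigenvectorUnitary

lemma eq_eigenvectorUnitary_mul_diagonal_mul_transpose :
    H = U * diagonal hH.eigenvalues * Uᵀ := by
  conv_lhs => rw [hH.spectral_theorem]
  simp only [Unitary.conjStarAlgAut_apply, star_eq_conjTranspose,
    conjTranspose_eq_transpose_of_trivial]
  rfl

lemma transpose_eigenvectorUnitary_mul : Uᵀ * H = diagonal hH.eigenvalues * Uᵀ :=
  calc Uᵀ * H = Uᵀ * (U * diagonal hH.eigenvalues * Uᵀ) :=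
        congrArg _ hH.eq_eigenvectorUnitary_mul_diagonal_mul_transpose
    _ = diagonal hH.eigenvalues * Uᵀ := by
      rw [← Matrix.mul_assoc, ← Matrix.mul_assoc, hH.transpose_mul_eigenvectorUnitary,
        Matrix.one_mul]

lemma dotProduct_mulVec_eq_sum_eigenvalues_mul_sq (v : ι → ℝ) :
    v ⬝ᵥ H *ᵥ v = ∑ i, hH.eigenvalues i * (Uᵀ *ᵥ v) i ^ 2 := by
  conv_lhs => rw [hH.eq_eigenvectorUnitary_mul_diagonal_mul_transpose]
  rw [← mulVec_mulVec, ← mulVec_mulVec, dotProduct_mulVec, ← mulVec_transpose]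
  simp only [dotProduct, mulVec_diagonal]
  exact Finset.sum_congr rfl fun i _ => by ring

lemma dotProduct_self_transpose_eigenvectorUnitary_mulVec (v : ι → ℝ) :
    (Uᵀ *ᵥ v) ⬝ᵥ (Uᵀ *ᵥ v) = v ⬝ᵥ v := by
  rw [dotProduct_mulVec, ← mulVec_transpose, transpose_transpose, mulVec_mulVec,
    hH.eigenvectorUnitary_mul_transpose, one_mulVec]

lemma dotProduct_mulVec_le_of_eigenvalues_le {c : ℝ} (hc : ∀ i, hH.eigenvalues i ≤ c)
    (v : ι → ℝ) : v ⬝ᵥ H *ᵥ v ≤ c * (v ⬝ᵥ v) := by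
  rw [hH.dotProduct_mulVec_eq_sum_eigenvalues_mul_sq,
    ← hH.dotProduct_self_transpose_eigenvectorUnitary_mulVec, dotProduct, Finset.mul_sum]
  exact Finset.sum_le_sum fun i _ =>
    (mul_le_mul_of_nonneg_right (hc i) (sq_nonneg _)).trans_eq (congrArg _ (sq _))

lemma eigenvalues_le_of_dotProduct_mulVec_le {c : ℝ}
    (h : ∀ v, v ⬝ᵥ H *ᵥ v ≤ c * (v ⬝ᵥ v)) (i : ι) : hH.eigenvalues i ≤ c := by
  have hu : ⇑(hH.eigenvectorBasis i) ⬝ᵥ ⇑(hH.eigenvectorBasis i) = 1 := by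
    have := orthonormal_iff_ite.mp hH.eigenvectorBasis.orthonormal i i
    rwa [if_pos rfl, EuclideanSpace.inner_eq_star_dotProduct, star_trivial] at this
  simpa [hH.eigenvalues_eq i, hu] using h (hH.eigenvectorBasis i)

end Matrix.IsHermitian

lemma dotProduct_self_nonneg {ι : Type*} [Fintype ι] (v : ι → ℝ) : 0 ≤ v ⬝ᵥ v := by
  simpa using dotProduct_self_star_nonneg v

lemma dotProduct_mulVec_transpose_mul_le {m n : Type*} [Fintype m] [Fintype n]
    (A : Matrix m n ℝ) {c : ℝ} (hc : 0 ≤ c) (h : ∀ w, w ⬝ᵥ (A * Aᵀ) *ᵥ w ≤ c * (w ⬝ᵥ w))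
    (v : n → ℝ) : v ⬝ᵥ (Aᵀ * A) *ᵥ v ≤ c * (v ⬝ᵥ v) := by
  set x := A *ᵥ v
  have hv : v ⬝ᵥ (Aᵀ * A) *ᵥ v = x ⬝ᵥ x := by
    rw [← mulVec_mulVec, dotProduct_mulVec, ← mulVec_transpose, transpose_transpose]
  have hx : (Aᵀ *ᵥ x) ⬝ᵥ (Aᵀ *ᵥ x) = x ⬝ᵥ (A * Aᵀ) *ᵥ x := by
    rw [← mulVec_mulVec, dotProduct_mulVec x, ← mulVec_transpose]
  have hcs : (x ⬝ᵥ x) ^ 2 ≤ c * (x ⬝ᵥ x) * (v ⬝ᵥ v) :=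
    calc (x ⬝ᵥ x) ^ 2 = ((Aᵀ *ᵥ x) ⬝ᵥ v) ^ 2 := by
          rw [mulVec_transpose, ← dotProduct_mulVec]
      _ ≤ ((Aᵀ *ᵥ x) ⬝ᵥ (Aᵀ *ᵥ x)) * (v ⬝ᵥ v) := by
          simpa only [dotProduct, sq] using Finset.sum_mul_sq_le_sq_mul_sq _ (Aᵀ *ᵥ x) v
      _ ≤ c * (x ⬝ᵥ x) * (v ⬝ᵥ v) := by
          rw [hx]; exact mul_le_mul_of_nonneg_right (h x) (dotProduct_self_nonneg v)
  rw [hv]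
  rcases (dotProduct_self_nonneg x).eq_or_lt with hx0 | hx0
  · rw [← hx0]; exact mul_nonneg hc (dotProduct_self_nonneg v)
  · exact le_of_mul_le_mul_left (by linarith) hx0

lemma dotProduct_mulVec_le_of_abs_le {ι : Type*} [Fintype ι] (A : Matrix ι ι ℝ) {s : ℝ}
    (hs : 0 ≤ s) (hA : ∀ i k, |A i k| ≤ s) (v : ι → ℝ) :
    v ⬝ᵥ A *ᵥ v ≤ Fintype.card ι * s * (v ⬝ᵥ v) :=
  calc v ⬝ᵥ A *ᵥ v = ∑ i, ∑ k, v i * A i k * v k := by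
        simp only [dotProduct, mulVec, Finset.mul_sum, mul_assoc]
    _ ≤ ∑ i, ∑ k, s * (|v i| * |v k|) := by
        refine Finset.sum_le_sum fun i _ => Finset.sum_le_sum fun k _ => ?_
        calc v i * A i k * v k ≤ |v i * A i k * v k| := le_abs_self _
          _ = |A i k| * (|v i| * |v k|) := by simp only [abs_mul]; ring
          _ ≤ s * (|v i| * |v k|) := by gcongr; exact hA i k
    _ = s * (∑ i, |v i|) ^ 2 := by
        rw [sq, Finset.sum_mul_sum, Finset.mul_sum]
        simp only [Finset.mul_sum]
    _ ≤ s * (Fintype.card ι * ∑ i, |v i| ^ 2) := by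
        gcongr; exact sq_sum_le_card_mul_sum_sq
    _ = Fintype.card ι * s * (v ⬝ᵥ v) := by
        simp only [sq_abs, dotProduct, ← sq]; ring

lemma diagonal_mul_transpose_mul_mul_diagonal {m n R : Type*} [Fintype m] [Fintype n]
    [DecidableEq n] [CommSemiring R] (X : Matrix m n R) (v : n → R) :
    diagonal v * Xᵀ * X * diagonal v = (X * diagonal v)ᵀ * (X * diagonal v) := by
  rw [transpose_mul, diagonal_transpose, Matrix.mul_assoc, Matrix.mul_assoc]

lemma mul_diagonal_mul_transpose_apply {κ ι : Type*} [Fintype ι] [DecidableEq ι]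
    (X : Matrix κ ι ℝ) (u : ι → ℝ) (i k : κ) :
    (X * diagonal u * Xᵀ) i k = ∑ j, X i j * X k j * u j := by
  simp only [mul_apply (M := X * diagonal u), mul_diagonal, transpose_apply]
  exact Finset.sum_congr rfl fun j _ => by ring

lemma mul_diagonal_mul_transpose_eq_smul_add {κ ι : Type*} [Fintype κ] [Fintype ι]
    [DecidableEq ι] (X : Matrix κ ι ℝ) {v : ι → ℝ} (hv : ∀ j, v j = 0 ∨ v j = 1) (p : ℝ) :
    (X * diagonal v) * (X * diagonal v)ᵀ =
      p • (X * Xᵀ) + X * diagonal (fun j => v j - p) * Xᵀ := by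
  have hvv : (fun j => v j * v j) = v := funext fun j => by rcases hv j with h | h <;> simp [h]
  rw [transpose_mul, diagonal_transpose, Matrix.mul_assoc, ← Matrix.mul_assoc (diagonal v),
    diagonal_mul_diagonal, hvv, ← Matrix.mul_assoc]
  ext i k
  rw [Matrix.add_apply, Matrix.smul_apply, mul_diagonal_mul_transpose_apply,
    mul_diagonal_mul_transpose_apply, mul_apply]
  simp only [transpose_apply, smul_eq_mul, Finset.mul_sum, ← Finset.sum_add_distrib]
  exact Finset.sum_congr rfl fun j _ => by ring

lemma iSup_eigenvalues_transpose_mul_self_nonneg {n d : ℕ} (X : Matrix (Fin n) (Fin d) ℝ) :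
    0 ≤ ⨆ i, (hermXtX X).eigenvalues i :=
  Real.iSup_nonneg fun i => by
    simpa using (posSemidef_conjTranspose_mul_self X).eigenvalues_nonneg i

lemma eigenvalues_le_of_abs_le {n d : ℕ} (X : Matrix (Fin n) (Fin d) ℝ) {v : Fin d → ℝ}
    (hv : ∀ j, v j = 0 ∨ v j = 1) {p s lam : ℝ} (hp : 0 ≤ p) (hs : 0 ≤ s)
    (hZ : ∀ i k, |(X * diagonal (fun j => v j - p) * Xᵀ) i k| ≤ s)
    (hlam : p * (⨆ i, (hermXtX X).eigenvalues i) + n * s ≤ lam) (i : Fin d) :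
    (diag_herm X v).eigenvalues i ≤ lam := by
  set L := ⨆ i, (hermXtX X).eigenvalues i
  have hL : 0 ≤ L := iSup_eigenvalues_transpose_mul_self_nonneg X
  have hXXt : ∀ w, w ⬝ᵥ (X * Xᵀ) *ᵥ w ≤ L * (w ⬝ᵥ w) := by
    simpa using dotProduct_mulVec_transpose_mul_le Xᵀ hL
      ((hermXtX X).dotProduct_mulVec_le_of_eigenvalues_le
        (le_ciSup (Set.finite_range _).bddAbove))
  have hAAt : ∀ w, w ⬝ᵥ ((X * diagonal v) * (X * diagonal v)ᵀ) *ᵥ w ≤ lam * (w ⬝ᵥ w) := by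
    intro w
    have hdev := dotProduct_mulVec_le_of_abs_le _ hs hZ w
    rw [Fintype.card_fin] at hdev
    rw [mul_diagonal_mul_transpose_eq_smul_add X hv p, add_mulVec, dotProduct_add,
      smul_mulVec, dotProduct_smul, smul_eq_mul]
    nlinarith [mul_le_mul_of_nonneg_left (hXXt w) hp, dotProduct_self_nonneg w]
  refine (diag_herm X v).eigenvalues_le_of_dotProduct_mulVec_le (fun u => ?_) i
  rw [diagonal_mul_transpose_mul_mul_diagonal]
  exact dotProduct_mulVec_transpose_mul_le _ (by nlinarith) hAAt u

lemma tendsto_of_affine_recurrence {a : ℕ → ℝ} {q e : ℝ} (hq : |q| < 1)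
    (h : ∀ t, a (t + 1) = q * a t + e) : Tendsto a atTop (𝓝 (e / (1 - q))) := by
  have hq1 : 1 - q ≠ 0 := by linarith [le_abs_self q]
  have hclosed : ∀ t, a t = q ^ t * (a 0 - e / (1 - q)) + e / (1 - q) := by
    intro t
    induction t with
    | zero => ring
    | succ t ih => rw [h, ih]; field_simp; ring
  rw [funext hclosed]
  simpa using ((tendsto_pow_atTop_nhds_zero_of_abs_lt_one hq).mul_const
    (a 0 - e / (1 - q))).add_const (e / (1 - q))

lemma exists_tendsto_of_gradient_step {a : ℕ → ℝ} {c ev β : ℝ} (hc : 0 < c) (hev : 0 ≤ ev)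
    (hcev : c * ev < 2) (hβ : ev = 0 → β = 0) (h : ∀ t, a (t + 1) = a t - c * (ev * a t - β)) :
    ∃ l, Tendsto a atTop (𝓝 l) := by
  rcases hev.eq_or_lt with rfl | hev
  · have hconst : ∀ t, a t = a 0 := fun t => by
      induction t with
      | zero => rfl
      | succ t ih => rw [h, hβ rfl, ih]; ring
    exact ⟨a 0, tendsto_const_nhds.congr fun t => (hconst t).symm⟩
  · have hpos : 0 < c * ev := mul_pos hc hev
    exact ⟨_, tendsto_of_affine_recurrence (q := 1 - c * ev) (e := c * β)
      (abs_lt.mpr ⟨by linarith, by linarith⟩) fun t => (h t).trans (by ring)⟩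

lemma Matrix.PosSemidef.exists_tendsto_gradientDescent {ι : Type*} [Fintype ι] [DecidableEq ι]
    {H : Matrix ι ι ℝ} (hH : H.PosSemidef) {c : ℝ} (hc : 0 < c)
    (hcH : ∀ i, c * hH.isHermitian.eigenvalues i < 2) {b : ι → ℝ}
    (hb : ∀ v, H *ᵥ v = 0 → v ⬝ᵥ b = 0) {w : ℕ → ι → ℝ}
    (hw : ∀ t, w (t + 1) = w t - c • (H *ᵥ w t - b)) : ∃ l, Tendsto w atTop (𝓝 l) := by
  set hH' := hH.isHermitian
  set U : Matrix ι ι ℝ := (hH'.eigenvectorUnitary : Matrix ι ι ℝ)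
  set z : ℕ → ι → ℝ := fun t => Uᵀ *ᵥ w t
  have hUH : ∀ x, Uᵀ *ᵥ (H *ᵥ x) = diagonal hH'.eigenvalues *ᵥ (Uᵀ *ᵥ x) := fun x => by
    rw [mulVec_mulVec, hH'.transpose_eigenvectorUnitary_mul, ← mulVec_mulVec]
  have hconv : ∀ i, ∃ l, Tendsto (fun t => z t i) atTop (𝓝 l) := fun i =>
    exists_tendsto_of_gradient_step (β := (Uᵀ *ᵥ b) i) hc (hH.eigenvalues_nonneg i) (hcH i)
      (fun hev => hb (hH'.eigenvectorBasis i) (by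
        rw [hH'.mulVec_eigenvectorBasis]; exact smul_eq_zero_of_left hev _))
      (fun t => by simp only [z, hw, mulVec_sub, mulVec_smul, hUH, Pi.sub_apply, Pi.smul_apply,
        mulVec_diagonal, smul_eq_mul])
  choose l hl using hconv
  have hwz : w = fun t => U *ᵥ z t := funext fun t => by
    rw [mulVec_mulVec, hH'.eigenvectorUnitary_mul_transpose, one_mulVec]
  rw [hwz]
  exact ⟨U *ᵥ l, ((continuous_const.matrix_mulVec continuous_id).tendsto l).comp
    (tendsto_pi_nhds.mpr hl)⟩

lemma exists_tendsto_gd {n d : ℕ} (X : Matrix (Fin n) (Fin d) ℝ) (v : Fin d → ℝ)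
    (y : Fin n → ℝ) {η lam : ℝ} (hl : ∀ i, (diag_herm X v).eigenvalues i ≤ lam) (hη0 : 0 < η)
    (hη : η < 2 * n / lam) (w0 : Fin d → ℝ) :
    ∃ l, Tendsto (gd X (diagonal v) y η w0) atTop (𝓝 l) := by
  have hpos : 0 < 2 * n / lam := hη0.trans hη
  have hlam : 0 < lam := by
    by_contra! h
    exact hpos.not_ge (div_nonpos_of_nonneg_of_nonpos (by positivity) h)
  have hn : (0 : ℝ) < n := by
    by_contra! h
    exact hpos.not_ge (div_nonpos_of_nonpos_of_nonneg (by linarith) hlam.le)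
  set A := X * diagonal v
  have hH : (diagonal v * Xᵀ * X * diagonal v).PosSemidef := by
    rw [diagonal_mul_transpose_mul_mul_diagonal]
    simpa only [conjTranspose_eq_transpose_of_trivial] using posSemidef_conjTranspose_mul_self A
  refine hH.exists_tendsto_gradientDescent (c := η * (n : ℝ)⁻¹) (by positivity) (fun i => ?_)
    (fun u hu => ?_) (fun t => by rw [gd, smul_smul])
  · calc η * (n : ℝ)⁻¹ * hH.isHermitian.eigenvalues i ≤ η * (n : ℝ)⁻¹ * lam := by
          gcongr; exact hl i
      _ < 2 := by rw [lt_div_iff₀ hlam] at hη; field_simp; linarith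
  · rw [diagonal_mul_transpose_mul_mul_diagonal] at hu
    have hAu : u ∈ LinearMap.ker A.mulVecLin := ker_mulVecLin_transpose_mul_self A ▸ hu
    rw [LinearMap.mem_ker, mulVecLin_apply] at hAu
    rw [show diagonal v * Xᵀ = Aᵀ by simp [A, transpose_mul], dotProduct_mulVec,
      vecMul_transpose, hAu, zero_dotProduct]

lemma integral_eq_measureReal_of_eq_zero_or_eq_one {Ω : Type*} [MeasurableSpace Ω]
    {μ : Measure Ω} {f : Ω → ℝ} (hf : Measurable f) (h01 : ∀ ω, f ω = 0 ∨ f ω = 1) :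
    μ[f] = μ.real {ω | f ω = 1} :=
  calc μ[f] = ∫ ω, (f ⁻¹' {1}).indicator 1 ω ∂μ := by
        congr 1; ext ω; rcases h01 ω with h | h <;> simp [h]
    _ = μ.real {ω | f ω = 1} := integral_indicator_one (hf (measurableSet_singleton 1))

lemma one_sub_le_measureReal_of_measureReal_compl_le {Ω : Type*} [MeasurableSpace Ω]
    {μ : Measure Ω} [IsProbabilityMeasure μ] {G : Set Ω} {δ : ℝ} (h : μ.real Gᶜ ≤ δ) :
    1 - δ ≤ μ.real G := by
  have := measureReal_union_le (μ := μ) G Gᶜ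
  rw [Set.union_compl_self, probReal_univ] at this
  linarith

lemma two_mul_sq_mul_exp_neg_le {n : ℕ} {D δ s : ℝ} (hD : 0 < D) (hδ : 0 < δ)
    (h : 2 * D * (2 * n + log (1 / δ)) ≤ s ^ 2) : 2 * n ^ 2 * exp (-s ^ 2 / (2 * D)) ≤ δ := by
  have hexp : -s ^ 2 / (2 * D) ≤ -(2 * n) + log δ := by
    rw [div_le_iff₀ (by positivity)]
    rw [one_div, log_inv] at h
    linarith
  have hquad : 2 * (n : ℝ) ^ 2 ≤ exp (2 * n) := by
    nlinarith [quadratic_le_exp_of_nonneg (by positivity : (0 : ℝ) ≤ 2 * n)]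
  calc 2 * n ^ 2 * exp (-s ^ 2 / (2 * D)) ≤ 2 * n ^ 2 * exp (-(2 * n) + log δ) := by gcongr
    _ = 2 * n ^ 2 / exp (2 * n) * δ := by rw [exp_add, exp_neg, exp_log hδ]; ring
    _ ≤ δ := mul_le_of_le_one_left hδ.le ((div_le_one (exp_pos _)).mpr hquad)

lemma four_mul_add_le_sq_of_two_mul_sqrt_add_sqrt_le {A B s : ℝ} (hA : 0 ≤ A) (hB : 0 ≤ B)
    (h : 2 * √A + √B ≤ s) : 4 * A + B ≤ s ^ 2 :=
  calc 4 * A + B ≤ (2 * √A + √B) ^ 2 := by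
        nlinarith [sq_sqrt hA, sq_sqrt hB, sqrt_nonneg A, sqrt_nonneg B]
    _ ≤ s ^ 2 := pow_le_pow_left₀ (by positivity) h 2

lemma two_mul_mul_add_log_le_sq {n d : ℕ} {r δ lam : ℝ} (hn : 0 < n) (hδ0 : 0 < δ)
    (hδ1 : δ < 1)
    (h : 2 * √(2 * d * n ^ 3 * r ^ 4) + √(2 * log (1 / δ) * d * n ^ 2 * r ^ 4) ≤ lam / 2) :
    2 * (d * r ^ 4) * (2 * n + log (1 / δ)) ≤ (lam / (2 * n)) ^ 2 := by
  have hL : 0 ≤ log (1 / δ) := log_nonneg (one_le_one_div hδ0 hδ1.le)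
  have hsq := four_mul_add_le_sq_of_two_mul_sqrt_add_sqrt_le (by positivity) (by positivity) h
  rw [div_pow, le_div_iff₀ (by positivity)]
  nlinarith [(by positivity : (0 : ℝ) ≤ d * n ^ 3 * r ^ 4)]

lemma mul_le_div_two_of_le_div {x L a : ℝ} (hL : 0 ≤ L) (ha : 0 ≤ a) (h : x ≤ a / (2 * L)) :
    x * L ≤ a / 2 := by
  rcases hL.eq_or_lt with rfl | hL
  · rw [mul_zero]; positivity
  · rw [le_div_iff₀ (by positivity)] at h
    linarith

section Hoeffding

variable {Ω : Type*} [MeasurableSpace Ω] {μ : Measure Ω} [IsProbabilityMeasure μ]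
  {ι : Type*} [Fintype ι] {m : ι → Ω → ℝ} {p R ε : ℝ} {c : ι → ℝ}

lemma measureReal_le_sum_mul_sub_le (hmeas : ∀ j, Measurable (m j))
    (hm : ∀ j ω, m j ω ∈ Set.Icc 0 1) (hmean : ∀ j, μ[m j] = p) (hindep : iIndepFun m μ)
    (hc : ∀ j, |c j| ≤ R) (hε : 0 ≤ ε) :
    μ.real {ω | ε ≤ ∑ j, c j * (m j ω - p)} ≤
      exp (-ε ^ 2 / (2 * (Fintype.card ι * R ^ 2))) := by
  have hsub : ∀ j, HasSubgaussianMGF (fun ω => c j * m j ω - c j * p)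
      ((‖R - -R‖₊ / 2) ^ 2) μ := by
    intro j
    have hbound : ∀ ω, c j * m j ω ∈ Set.Icc (-R) R := fun ω => by
      rw [Set.mem_Icc, ← abs_le, abs_mul]
      have hm1 : |m j ω| ≤ 1 := abs_le.mpr ⟨by linarith [(hm j ω).1], (hm j ω).2⟩
      nlinarith [abs_nonneg (c j), abs_nonneg (m j ω), hc j]
    simpa [integral_const_mul, hmean j] using hasSubgaussianMGF_of_mem_Icc (μ := μ)
      ((hmeas j).const_mul (c j)).aemeasurable (ae_of_all _ hbound)
  have hindep' : iIndepFun (fun j ω => c j * m j ω - c j * p) μ :=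
    hindep.comp (fun j x => c j * x - c j * p) (fun j => by fun_prop)
  convert HasSubgaussianMGF.measure_sum_ge_le_of_iIndepFun hindep' (s := Finset.univ)
    (fun j _ => hsub j) hε using 3
  · simp [mul_sub]
  · simp [← two_mul]

lemma measureReal_le_abs_sum_mul_sub_le (hmeas : ∀ j, Measurable (m j))
    (hm : ∀ j ω, m j ω ∈ Set.Icc 0 1) (hmean : ∀ j, μ[m j] = p) (hindep : iIndepFun m μ)
    (hc : ∀ j, |c j| ≤ R) (hε : 0 ≤ ε) :
    μ.real {ω | ε ≤ |∑ j, c j * (m j ω - p)|} ≤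
      2 * exp (-ε ^ 2 / (2 * (Fintype.card ι * R ^ 2))) := by
  have hneg : ∀ ω, -∑ j, c j * (m j ω - p) = ∑ j, -c j * (m j ω - p) := fun ω => by
    simp only [neg_mul, Finset.sum_neg_distrib]
  calc μ.real {ω | ε ≤ |∑ j, c j * (m j ω - p)|}
      ≤ μ.real ({ω | ε ≤ ∑ j, c j * (m j ω - p)} ∪ {ω | ε ≤ ∑ j, -c j * (m j ω - p)}) :=
        measureReal_mono fun ω (hω : ε ≤ |_|) => by
          rcases le_abs.mp hω with h | h
          · exact Or.inl h
          · exact Or.inr (h.trans_eq (hneg ω))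
    _ ≤ _ := measureReal_union_le _ _
    _ ≤ 2 * exp (-ε ^ 2 / (2 * (Fintype.card ι * R ^ 2))) := by
        rw [two_mul]
        gcongr
        · exact measureReal_le_sum_mul_sub_le hmeas hm hmean hindep hc hε
        · exact measureReal_le_sum_mul_sub_le hmeas hm hmean hindep
            (fun j => (abs_neg (c j)).trans_le (hc j)) hε

lemma measureReal_exists_lt_abs_le {κ : Type*} [Fintype κ] [DecidableEq ι] (X : Matrix κ ι ℝ)
    {r s δ : ℝ} (hX : ∀ i j, |X i j| ≤ r) (hmeas : ∀ j, Measurable (m j))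
    (hm : ∀ j ω, m j ω ∈ Set.Icc 0 1) (hmean : ∀ j, μ[m j] = p) (hindep : iIndepFun m μ)
    (hδ : 0 < δ) (hs : 0 ≤ s)
    (h : 2 * (Fintype.card ι * r ^ 4) * (2 * Fintype.card κ + log (1 / δ)) ≤ s ^ 2) :
    μ.real {ω | ∃ i k, s < |(X * diagonal (fun j => m j ω - p) * Xᵀ) i k|} ≤ δ := by
  rcases (show 0 ≤ (Fintype.card ι : ℝ) * r ^ 4 by positivity).eq_or_lt with hD | hD
  · -- Here `s ^ 2 / 0 = 0` makes Hoeffding's bound useless, but every entry vanishes.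
    have hzero : ∀ i j k, X i j * X k j = 0 := by
      intro i j k
      rcases mul_eq_zero.mp hD.symm with hι | hr
      · exact ((Fintype.card_eq_zero_iff.mp (by exact_mod_cast hι)).false j).elim
      · have hr0 : r = 0 := pow_eq_zero_iff (by norm_num) |>.mp hr
        simp [abs_nonpos_iff.mp (hr0 ▸ hX i j)]
    have hempty : {ω | ∃ i k, s < |(X * diagonal (fun j => m j ω - p) * Xᵀ) i k|} = ∅ := by
      ext ω
      simp [mul_diagonal_mul_transpose_apply, hzero, not_lt.mpr hs]
    rw [hempty, measureReal_empty]
    exact hδ.le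
  have hXX : ∀ i k j, |X i j * X k j| ≤ r ^ 2 := fun i k j => by
    rw [abs_mul, sq]
    exact mul_le_mul (hX i j) (hX k j) (abs_nonneg _) ((abs_nonneg _).trans (hX i j))
  calc μ.real {ω | ∃ i k, s < |(X * diagonal (fun j => m j ω - p) * Xᵀ) i k|}
      ≤ μ.real (⋃ i, ⋃ k, {ω | s ≤ |∑ j, X i j * X k j * (m j ω - p)|}) :=
        measureReal_mono fun ω ⟨i, k, hik⟩ => by
          simp only [Set.mem_iUnion, Set.mem_ofPred_eq]
          exact ⟨i, k, by rw [← mul_diagonal_mul_transpose_apply]; exact hik.le⟩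
    _ ≤ ∑ i, ∑ k, μ.real {ω | s ≤ |∑ j, X i j * X k j * (m j ω - p)|} :=
        (measureReal_iUnion_fintype_le _).trans
          (Finset.sum_le_sum fun i _ => measureReal_iUnion_fintype_le _)
    _ ≤ ∑ i : κ, ∑ k : κ, 2 * exp (-s ^ 2 / (2 * (Fintype.card ι * r ^ 4))) := by
        gcongr with i _ k _
        simpa [← pow_mul] using
          measureReal_le_abs_sum_mul_sub_le hmeas hm hmean hindep (hXX i k) hs
    _ = 2 * (Fintype.card κ : ℝ) ^ 2 * exp (-s ^ 2 / (2 * (Fintype.card ι * r ^ 4))) := by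
        simp only [Finset.sum_const, Finset.card_univ, nsmul_eq_mul]; ring
    _ ≤ δ := two_mul_sq_mul_exp_neg_le hD hδ h

end Hoeffding

theorem masked_gd_stable_general {n d : ℕ} {Ω : Type} [MeasurableSpace Ω]
    (μ : Measure Ω) [IsProbabilityMeasure μ]
    (p r δ lam0 : ℝ) (hp0 : 0 ≤ p) (hδ0 : 0 < δ) (hδ1 : δ < 1)
    (hlam0 : 0 < lam0)
    (X : Matrix (Fin n) (Fin d) ℝ) (hX : ∀ i j, X i j ∈ Set.Icc (0 : ℝ) r)
    (y : Fin n → ℝ)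
    (m : Fin d → Ω → ℝ) (h01 : ∀ i ω, m i ω = 0 ∨ m i ω = 1)
    (hmeas : ∀ i, Measurable (m i))
    (hber : ∀ i, μ {ω | m i ω = 1} = ENNReal.ofReal p)
    (hindep : ProbabilityTheory.iIndepFun m μ)
    (hplam : p ≤ lam0 / (2 * (⨆ i, (hermXtX X).eigenvalues i)))
    (hbound : 2 * Real.sqrt (2 * d * n ^ 3 * r ^ 4) +
      Real.sqrt (2 * Real.log (1 / δ) * d * n ^ 2 * r ^ 4) ≤ lam0 / 2) :
    ENNReal.ofReal (1 - δ) ≤ μ {ω |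
      (⨆ i, (diag_herm X (fun j => m j ω)).eigenvalues i) ≤ lam0 ∧
      ∀ η : ℝ, 0 < η → η < 2 * n / lam0 → ∀ w0 : Fin d → ℝ,
        ∃ l : Fin d → ℝ,
          Tendsto (gd X (Matrix.diagonal (fun j => m j ω)) y η w0) atTop (nhds l)} := by
  set s := lam0 / (2 * n)
  set G := {ω | ∀ i k, |(X * diagonal (fun j => m j ω - p) * Xᵀ) i k| ≤ s}
  have hs : 0 ≤ s := by positivity
  have hXr : ∀ i j, |X i j| ≤ r := fun i j => (abs_of_nonneg (hX i j).1).trans_le (hX i j).2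
  have hm : ∀ j ω, m j ω ∈ Set.Icc (0 : ℝ) 1 := fun j ω => by
    rcases h01 j ω with h | h <;> simp [h]
  have hmean : ∀ j, μ[m j] = p := fun j => by
    rw [integral_eq_measureReal_of_eq_zero_or_eq_one (hmeas j) (h01 j), measureReal_def, hber,
      ENNReal.toReal_ofReal hp0]
  have hG : 1 - δ ≤ μ.real G := by
    rcases Nat.eq_zero_or_pos n with rfl | hn
    · simpa [G] using hδ0.le
    refine one_sub_le_measureReal_of_measureReal_compl_le ?_
    simpa only [G, Set.compl_ofPred, not_forall, not_le] using
      measureReal_exists_lt_abs_le X hXr hmeas hm hmean hindep hδ0 hs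
        (by simpa using two_mul_mul_add_log_le_sq hn hδ0 hδ1 hbound)
  refine (ENNReal.ofReal_le_ofReal hG).trans
    ((ofReal_measureReal).trans_le (measure_mono fun ω hω => ?_))
  have hlam : p * (⨆ i, (hermXtX X).eigenvalues i) + n * s ≤ lam0 := by
    linarith [mul_le_div_two_of_le_div (iSup_eigenvalues_transpose_mul_self_nonneg X) hlam0.le
      hplam, mul_le_div_two_of_le_div (x := s) (Nat.cast_nonneg n) hlam0.le le_rfl]
  have heig := eigenvalues_le_of_abs_le X (h01 · ω) hp0 hs hω hlam
  exact ⟨Real.iSup_le heig hlam0.le, fun η hη0 hη w0 => exists_tendsto_gd X _ y heig hη0 hη w0⟩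

/-- under the stated smallness conditions, with probability ≥ 1 − δ the
largest eigenvalue of H = MXᵀXM is at most λ₀, hence GD with any 0 < η < 2n/λ₀ converges
from every initialization. -/
theorem masked_gd_stable {n d : ℕ} {Ω : Type} [MeasurableSpace Ω]
    (μ : Measure Ω) [IsProbabilityMeasure μ]
    (p r δ lam0 : ℝ) (hp0 : 0 ≤ p) (hp1 : p ≤ 1) (hδ0 : 0 < δ) (hδ1 : δ < 1)
    (hlam0 : 0 < lam0)
    (X : Matrix (Fin n) (Fin d) ℝ) (hX : ∀ i j, X i j ∈ Set.Icc (0 : ℝ) r)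
    (y : Fin n → ℝ)
    (m : Fin d → Ω → ℝ) (h01 : ∀ i ω, m i ω = 0 ∨ m i ω = 1)
    (hmeas : ∀ i, Measurable (m i))
    (hber : ∀ i, μ {ω | m i ω = 1} = ENNReal.ofReal p)
    (hindep : ProbabilityTheory.iIndepFun m μ)
    (hplam : p ≤ lam0 / (2 * (⨆ i, (hermXtX X).eigenvalues i)))
    (hbound : 2 * Real.sqrt (2 * d * n ^ 3 * r ^ 4) +
      Real.sqrt (2 * Real.log (1 / δ) * d * n ^ 2 * r ^ 4) ≤ lam0 / 2) :
    ENNReal.ofReal (1 - δ) ≤ μ {ω |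
      (⨆ i, (diag_herm X (fun j => m j ω)).eigenvalues i) ≤ lam0 ∧
      ∀ η : ℝ, 0 < η → η < 2 * n / lam0 → ∀ w0 : Fin d → ℝ,
        ∃ l : Fin d → ℝ,
          Tendsto (gd X (Matrix.diagonal (fun j => m j ω)) y η w0) atTop (nhds l)} :=
  masked_gd_stable_general μ p r δ lam0 hp0 hδ0 hδ1 hlam0 X hX y m h01 hmeas hber hindep hplam
    hbound
end
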